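/- Let k ≥ 4 be an integer, K0 > 0, K1 = (2k+1)!!·K0, γ = k/3 − 1/2, p ∈ (2,3), B* > 0, C_g > 0, D > 0, Γ ∈ ℝ and C_W > 0. Let g : (0,∞) → ℝ satisfy |g(y)| ≤ C_g·y^{−5}·(1+y^{4k−2}) for all y > 0, and let W : (0,∞) → (0,∞) solve the Alencar equation with |W(z) − z − z^{−2} − Γ·z^{−3}| ≤ C_W·z^{−5} for all z ≥ 1. For δ ∈ (0, K1/2) set K2^±(δ) = (K1 ± 2δ)^{1/3}, w_δ^+(z,τ) = W_{K2^+(δ)}(z), w_δ^−(z,τ) = W_{K2^−(δ)}(z) + D·e^{2γτ}, and w_md^±(z,τ) = e^{−γτ}·(y + (K1 ± δ)·e^{3γτ}·φ_k(y) ± (B*·K1²·e^{6γτ}·g(y) + e^{(p+1)γτ}·y^{−p})) evaluated at y = e^{γτ}·z. Then there exists δ̄ ∈ (0, K1/2) such that for every δ ∈ (0, δ̄), setting Z_δ = (4/3)·δ^{−1/(p−2)}, there exists τ_δ ∈ ℝ with: for all τ ≤ τ_δ, w_md^+(Z_δ/2, τ) > w_δ^+(Z_δ/2, τ), w_md^−(Z_δ/2,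 τ) < w_δ^−(Z_δ/2, τ), w_md^+(Z_δ, τ) < w_δ^+(Z_δ, τ), and w_md^−(Z_δ, τ) > w_δ^−(Z_δ, τ). -/

import Mathlib

/-!
With `y = e^{γτ} z`, the rescalings in `wmd` cancel and
`w_md^±(z, τ) = z + (K1 ± δ) z⁻² (y² φ_k(y)) ± (B* K1² z⁻⁵ (y⁵ g(y)) + z^{-p})`.
As `τ → -∞`, `y → 0⁺`, so `y² φ_k(y) → 1` while `y⁵ g(y)` stays bounded by `2 C_g`.
On the other hand `W_K(z) = z + K³ z⁻² + Γ K⁴ z⁻³ + O(K⁶ z⁻⁵)` for `z ≥ K`, and `K³ = K1 ± 2δ`.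
Hence `w_md^± - w_δ^± = ±(z^{-p} - δ z⁻²) + O(z⁻³) + o(1)`. At `z = a δ^{-1/(p-2)}` the main term
is `±(1 - a^{p-2}) z^{-p}`, which has opposite signs for `a = 2/3` and `a = 4/3` and, as `p < 3`,
dominates the `O(z⁻³)` error once `δ` is small, i.e. `z` is large.
-/

open Filter Set

/-- The eigenfunction `φ_k(y) = y^{-2} Σ_{n=0}^k (binom(k,n)/(2n+1)!!) y^{2n}`. -/
noncomputable def phik (k : ℕ) (y : ℝ) : ℝ :=
  y ^ (-2 : ℤ) * ∑ n ∈ Finset.range (k + 1),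
    ((k.choose n : ℝ) / (Nat.doubleFactorial (2 * n + 1) : ℝ)) * y ^ (2 * n)

/-- The rescaled Alencar solution `W_K(z) = K W(z/K)`. -/
noncomputable def WK (W : ℝ → ℝ) (K z : ℝ) : ℝ := K * W (z / K)

/-- The intermediate barriers expressed in the inner variable `z = e^{-γτ} y`,
with sign `ε = ±1`:
`w_md^±(z,τ) = e^{-γτ} v_δ^±(e^{γτ} z, τ)`. -/
noncomputable def wmd (k : ℕ) (K1 γ Bstar p : ℝ) (g : ℝ → ℝ) (δ ε z τ : ℝ) : ℝ :=
  Real.exp (-(γ * τ)) *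
    (Real.exp (γ * τ) * z
      + (K1 + ε * δ) * Real.exp (3 * γ * τ) * phik k (Real.exp (γ * τ) * z)
      + ε * (Bstar * K1 ^ 2 * Real.exp (6 * γ * τ) * g (Real.exp (γ * τ) * z)
          + Real.exp ((p + 1) * γ * τ) * (Real.exp (γ * τ) * z) ^ (-p)))

open Topology Real

lemma sq_mul_phik (k : ℕ) {y : ℝ} (hy : y ≠ 0) :
    y ^ 2 * phik k y = ∑ n ∈ Finset.range (k + 1),
      ((k.choose n : ℝ) / (Nat.doubleFactorial (2 * n + 1) : ℝ)) * y ^ (2 * n) := by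
  rw [phik, ← mul_assoc, zpow_neg, zpow_ofNat, mul_inv_cancel₀ (pow_ne_zero 2 hy), one_mul]

lemma tendsto_sq_mul_phik (k : ℕ) : Tendsto (fun y ↦ y ^ 2 * phik k y) (𝓝[>] 0) (𝓝 1) := by
  let P : ℝ → ℝ := fun y ↦ ∑ n ∈ Finset.range (k + 1),
    ((k.choose n : ℝ) / (Nat.doubleFactorial (2 * n + 1) : ℝ)) * y ^ (2 * n)
  have hP : Continuous P := by fun_prop
  have hP0 : P 0 = 1 := by simp [P, Finset.sum_range_succ', Nat.doubleFactorial]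
  refine (hP0 ▸ hP.tendsto 0 |>.mono_left nhdsWithin_le_nhds).congr' ?_
  filter_upwards [self_mem_nhdsWithin] with y hy using (sq_mul_phik k hy.ne').symm

variable {k : ℕ} {K1 γ B p : ℝ} {g : ℝ → ℝ} {δ ε z : ℝ}

lemma wmd_eq (hz : 0 < z) (τ : ℝ) : wmd k K1 γ B p g δ ε z τ =
    z + (K1 + ε * δ) * z ^ (-2 : ℤ) * ((exp (γ * τ) * z) ^ 2 * phik k (exp (γ * τ) * z))
      + ε * (B * K1 ^ 2 * z ^ (-5 : ℤ) * ((exp (γ * τ) * z) ^ 5 * g (exp (γ * τ) * z))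
        + z ^ (-p)) := by
  have hE := exp_pos (γ * τ)
  have h3 : exp (3 * γ * τ) = exp (γ * τ) ^ 3 := by rw [← exp_nat_mul]; ring_nf
  have h6 : exp (6 * γ * τ) = exp (γ * τ) ^ 6 := by rw [← exp_nat_mul]; ring_nf
  have hp : exp ((p + 1) * γ * τ) * (exp (γ * τ) * z) ^ (-p) = exp (γ * τ) * z ^ (-p) := by
    rw [mul_rpow hE.le hz.le, ← exp_mul, ← mul_assoc, ← exp_add]; ring_nf
  rw [wmd, mul_add, hp, h3, h6, exp_neg]
  simp only [zpow_neg, zpow_ofNat]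
  field_simp

lemma eventually_abs_pow_five_mul_le {Cg : ℝ} {m : ℕ} (hCg : 0 ≤ Cg)
    (hg : ∀ y > (0:ℝ), |g y| ≤ Cg * y ^ (-5 : ℤ) * (1 + y ^ m)) :
    ∀ᶠ y in 𝓝[>] 0, |y ^ 5 * g y| ≤ 2 * Cg := by
  filter_upwards [Ioo_mem_nhdsGT one_pos] with y ⟨hy0, hy1⟩
  have hym : y ^ m ≤ 1 := pow_le_one₀ hy0.le hy1.le
  calc |y ^ 5 * g y| ≤ y ^ 5 * (Cg * y ^ (-5 : ℤ) * (1 + y ^ m)) := by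
        rw [abs_mul, abs_of_pos (by positivity)]
        exact mul_le_mul_of_nonneg_left (hg y hy0) (by positivity)
    _ = Cg * (1 + y ^ m) := by field_simp
    _ ≤ 2 * Cg := by nlinarith

lemma tendsto_exp_mul_atBot {c : ℝ} (hc : 0 < c) : Tendsto (fun τ ↦ exp (c * τ)) atBot (𝓝 0) :=
  tendsto_exp_atBot.comp (tendsto_id.const_mul_atBot hc)

lemma tendsto_exp_mul_mul_atBot_nhdsGT (hγ : 0 < γ) (hz : 0 < z) :
    Tendsto (fun τ ↦ exp (γ * τ) * z) atBot (𝓝[>] 0) := by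
  refine tendsto_nhdsWithin_iff.2 ⟨?_, .of_forall fun τ ↦ mem_Ioi.2 (by positivity)⟩
  simpa using (tendsto_exp_mul_atBot hγ).mul_const z

lemma eventually_abs_wmd_sub_le {Cg η : ℝ} {m : ℕ} (hγ : 0 < γ) (hCg : 0 ≤ Cg)
    (hg : ∀ y > (0:ℝ), |g y| ≤ Cg * y ^ (-5 : ℤ) * (1 + y ^ m)) (hε : |ε| = 1) (hz : 0 < z)
    (hη : 0 < η) :
    ∀ᶠ τ in atBot, |wmd k K1 γ B p g δ ε z τ - (z + (K1 + ε * δ) * z ^ (-2 : ℤ) + ε * z ^ (-p))|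
      ≤ η + 2 * |B| * K1 ^ 2 * Cg * z ^ (-5 : ℤ) := by
  have hy := tendsto_exp_mul_mul_atBot_nhdsGT hγ hz
  have hphi : Tendsto (fun τ ↦ (K1 + ε * δ) * z ^ (-2 : ℤ) *
      ((exp (γ * τ) * z) ^ 2 * phik k (exp (γ * τ) * z) - 1)) atBot (𝓝 0) := by
    simpa using (((tendsto_sq_mul_phik k).sub_const 1).comp hy).const_mul _
  filter_upwards [Metric.tendsto_nhds.1 hphi η hη,
    hy.eventually (eventually_abs_pow_five_mul_le hCg hg)] with τ hφ hg5
  rw [dist_zero_right, Real.norm_eq_abs] at hφ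
  rw [wmd_eq hz]
  calc _ = |(K1 + ε * δ) * z ^ (-2 : ℤ) * ((exp (γ * τ) * z) ^ 2 * phik k (exp (γ * τ) * z) - 1)
        + ε * (B * K1 ^ 2 * z ^ (-5 : ℤ)) * ((exp (γ * τ) * z) ^ 5 * g (exp (γ * τ) * z))| := by
        ring_nf
    _ ≤ η + |B| * K1 ^ 2 * z ^ (-5 : ℤ) * (2 * Cg) := by
        refine (abs_add_le _ _).trans (add_le_add hφ.le ?_)
        rw [abs_mul, abs_mul, abs_mul, abs_mul, hε, one_mul, abs_of_nonneg (sq_nonneg K1),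
          abs_of_pos (by positivity : (0:ℝ) < z ^ (-5 : ℤ))]
        gcongr
    _ = η + 2 * |B| * K1 ^ 2 * Cg * z ^ (-5 : ℤ) := by ring

lemma abs_WK_sub_le {W : ℝ → ℝ} {Γ CW K : ℝ}
    (hW : ∀ x ≥ (1:ℝ), |W x - x - x ^ (-2 : ℤ) - Γ * x ^ (-3 : ℤ)| ≤ CW * x ^ (-5 : ℤ))
    (hK : 0 < K) (hKz : K ≤ z) :
    |WK W K z - z - K ^ 3 * z ^ (-2 : ℤ) - Γ * K ^ 4 * z ^ (-3 : ℤ)|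
      ≤ CW * K ^ 6 * z ^ (-5 : ℤ) := by
  have hz : 0 < z := hK.trans_le hKz
  have hscale : WK W K z - z - K ^ 3 * z ^ (-2 : ℤ) - Γ * K ^ 4 * z ^ (-3 : ℤ)
      = K * (W (z / K) - z / K - (z / K) ^ (-2 : ℤ) - Γ * (z / K) ^ (-3 : ℤ)) := by
    simp only [WK, zpow_neg, zpow_ofNat, div_pow]
    field_simp
  rw [hscale, abs_mul, abs_of_pos hK]
  calc _ ≤ K * (CW * (z / K) ^ (-5 : ℤ)) :=
        mul_le_mul_of_nonneg_left (hW (z / K) ((one_le_div hK).2 hKz)) hK.le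
    _ = CW * K ^ 6 * z ^ (-5 : ℤ) := by
        simp only [zpow_neg, zpow_ofNat, div_pow]
        field_simp

lemma eventually_error_lt_rpow_neg {R C₃ C₅ c : ℝ} (hp : p < 3) (hc : 0 < c) :
    ∀ᶠ z in atTop, R ≤ z ∧ C₃ * z ^ (-3 : ℤ) + C₅ * z ^ (-5 : ℤ) < c * z ^ (-p) := by
  have h3 : Tendsto (fun z : ℝ ↦ z ^ (-(3 - p))) atTop (𝓝 0) := tendsto_rpow_neg_atTop (by linarith)
  have h5 : Tendsto (fun z : ℝ ↦ z ^ (-(5 - p))) atTop (𝓝 0) := tendsto_rpow_neg_atTop (by linarith)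
  have h := (h3.const_mul C₃).add (h5.const_mul C₅)
  rw [mul_zero, mul_zero, add_zero] at h
  filter_upwards [eventually_ge_atTop R, eventually_gt_atTop 0, h.eventually (gt_mem_nhds hc)]
    with z hRz hz hlt
  have hsplit : ∀ n : ℕ, z ^ (-(n : ℤ)) = z ^ (-(n - p)) * z ^ (-p) := fun n ↦ by
    rw [← rpow_add hz, ← rpow_intCast]; push_cast; ring_nf
  refine ⟨hRz, ?_⟩
  calc C₃ * z ^ (-3 : ℤ) + C₅ * z ^ (-5 : ℤ)
      = (C₃ * z ^ (-(3 - p)) + C₅ * z ^ (-(5 - p))) * z ^ (-p) := by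
        rw [show (-3 : ℤ) = -((3 : ℕ) : ℤ) from rfl, show (-5 : ℤ) = -((5 : ℕ) : ℤ) from rfl,
          hsplit, hsplit]
        push_cast; ring
    _ < c * z ^ (-p) := by gcongr

lemma rpow_neg_sub_mul_zpow_eq {a δ : ℝ} (ha : 0 < a) (hδ : 0 < δ) (hp : p ≠ 2) :
    (a * δ ^ (-(1 / (p - 2)))) ^ (-p) - δ * (a * δ ^ (-(1 / (p - 2)))) ^ (-2 : ℤ)
      = (1 - a ^ (p - 2)) * (a * δ ^ (-(1 / (p - 2)))) ^ (-p) := by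
  set z := a * δ ^ (-(1 / (p - 2)))
  have hz : 0 < z := by positivity
  have hδz : δ = a ^ (p - 2) * z ^ (-(p - 2)) := by
    rw [mul_rpow ha.le (by positivity), ← rpow_mul hδ.le, ← mul_assoc, ← rpow_add ha]
    field_simp [sub_ne_zero.2 hp]
    simp
  rw [hδz, mul_assoc, ← rpow_intCast, ← rpow_add hz]
  push_cast
  ring_nf

lemma eventually_error_lt_gap {a s R C₃ C₅ : ℝ} (ha : 0 < a) (hs : 0 < s * (1 - a ^ (p - 2)))
    (hp : p ∈ Ioo 2 3) :
    ∀ᶠ δ in 𝓝[>] 0, R ≤ a * δ ^ (-(1 / (p - 2))) ∧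
      C₃ * (a * δ ^ (-(1 / (p - 2)))) ^ (-3 : ℤ) + C₅ * (a * δ ^ (-(1 / (p - 2)))) ^ (-5 : ℤ)
        < s * ((a * δ ^ (-(1 / (p - 2)))) ^ (-p) - δ * (a * δ ^ (-(1 / (p - 2)))) ^ (-2 : ℤ)) := by
  have hZ : Tendsto (fun δ ↦ a * δ ^ (-(1 / (p - 2)))) (𝓝[>] 0) atTop :=
    (tendsto_rpow_neg_nhdsGT_zero (neg_neg_of_pos (one_div_pos.2 (sub_pos.2 hp.1)))).const_mul_atTop
      ha
  filter_upwards [hZ.eventually (eventually_error_lt_rpow_neg hp.2 hs), self_mem_nhdsWithin]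
    with δ hδZ hδ
  rwa [rpow_neg_sub_mul_zpow_eq ha hδ hp.1.ne', ← mul_assoc]

lemma eventually_abs_wmd_sub_WK_sub_lt {W : ℝ → ℝ} {Γ CW Cg R K D η : ℝ} {m : ℕ} (hγ : 0 < γ)
    (hCg : 0 ≤ Cg) (hg : ∀ y > (0:ℝ), |g y| ≤ Cg * y ^ (-5 : ℤ) * (1 + y ^ m)) (hCW : 0 ≤ CW)
    (hW : ∀ x ≥ (1:ℝ), |W x - x - x ^ (-2 : ℤ) - Γ * x ^ (-3 : ℤ)| ≤ CW * x ^ (-5 : ℤ))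
    (hε : |ε| = 1) (hK : 0 < K) (hKR : K ≤ R) (hRz : R ≤ z) (hK3 : K ^ 3 = K1 + 2 * ε * δ)
    (hη : 0 < η) :
    ∀ᶠ τ in atBot, |wmd k K1 γ B p g δ ε z τ - (WK W K z + D * exp (2 * γ * τ))
        - ε * (z ^ (-p) - δ * z ^ (-2 : ℤ))|
      < η + (|Γ| * R ^ 4 * z ^ (-3 : ℤ) + (CW * R ^ 6 + 2 * |B| * K1 ^ 2 * Cg) * z ^ (-5 : ℤ)) := by
  have hz : 0 < z := hK.trans_le (hKR.trans hRz)
  have hexp : Tendsto (fun τ ↦ D * exp (2 * γ * τ)) atBot (𝓝 0) := by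
    simpa using (tendsto_exp_mul_atBot (by positivity : 0 < 2 * γ)).const_mul D
  filter_upwards [eventually_abs_wmd_sub_le (k := k) (K1 := K1) (B := B) (p := p) (δ := δ)
      hγ hCg hg hε hz (half_pos hη), Metric.tendsto_nhds.1 hexp (η / 2) (half_pos hη)] with τ hmd hD
  rw [dist_zero_right, Real.norm_eq_abs] at hD
  have hWK := abs_WK_sub_le hW hK (hKR.trans hRz)
  have hΓ : |Γ * K ^ 4 * z ^ (-3 : ℤ)| ≤ |Γ| * R ^ 4 * z ^ (-3 : ℤ) := by
    rw [abs_mul, abs_mul, abs_of_pos (by positivity : (0:ℝ) < z ^ (-3 : ℤ)), abs_pow,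
      abs_of_pos hK]
    gcongr
  have hCWR : CW * K ^ 6 * z ^ (-5 : ℤ) ≤ CW * R ^ 6 * z ^ (-5 : ℤ) := by gcongr
  rw [hK3] at hWK
  rw [abs_le] at hmd hWK hΓ
  rw [abs_lt] at hD ⊢
  constructor <;> linarith

lemma rpow_one_div_three_pow_three {x : ℝ} (hx : 0 ≤ x) : (x ^ ((1:ℝ) / 3)) ^ 3 = x := by
  simpa using rpow_inv_natCast_pow hx (n := 3) (by norm_num)

lemma eventually_matching_at {W : ℝ → ℝ} {Γ CW Cg D s : ℝ} {m : ℕ} (hγ : 0 < γ)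
    (hCg : 0 ≤ Cg) (hg : ∀ y > (0:ℝ), |g y| ≤ Cg * y ^ (-5 : ℤ) * (1 + y ^ m)) (hCW : 0 ≤ CW)
    (hW : ∀ x ≥ (1:ℝ), |W x - x - x ^ (-2 : ℤ) - Γ * x ^ (-3 : ℤ)| ≤ CW * x ^ (-5 : ℤ))
    (hδ : 0 < δ) (hδK : 2 * δ < K1) (hs : |s| = 1) (hRz : (2 * K1) ^ ((1:ℝ) / 3) ≤ z)
    (hgap : |Γ| * ((2 * K1) ^ ((1:ℝ) / 3)) ^ 4 * z ^ (-3 : ℤ)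
        + (CW * ((2 * K1) ^ ((1:ℝ) / 3)) ^ 6 + 2 * |B| * K1 ^ 2 * Cg) * z ^ (-5 : ℤ)
      < s * (z ^ (-p) - δ * z ^ (-2 : ℤ))) :
    ∀ᶠ τ in atBot, 0 < s * (wmd k K1 γ B p g δ 1 z τ - WK W ((K1 + 2 * δ) ^ ((1:ℝ) / 3)) z) ∧
      0 < s * (WK W ((K1 - 2 * δ) ^ ((1:ℝ) / 3)) z + D * exp (2 * γ * τ)
        - wmd k K1 γ B p g δ (-1) z τ) := by
  have hcbrt : ∀ x, 0 < x → x ≤ 2 * K1 →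
      0 < x ^ ((1:ℝ) / 3) ∧ x ^ ((1:ℝ) / 3) ≤ (2 * K1) ^ ((1:ℝ) / 3) :=
    fun x hx hxK ↦ ⟨rpow_pos_of_pos hx _, rpow_le_rpow hx.le hxK (by norm_num)⟩
  obtain ⟨hKp, hKpR⟩ := hcbrt (K1 + 2 * δ) (by linarith) (by linarith)
  obtain ⟨hKm, hKmR⟩ := hcbrt (K1 - 2 * δ) (by linarith) (by linarith)
  have hη := sub_pos.2 hgap
  filter_upwards [
    eventually_abs_wmd_sub_WK_sub_lt (k := k) (B := B) (p := p) (δ := δ) (ε := 1) (D := 0)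
      hγ hCg hg hCW hW (by norm_num) hKp hKpR hRz
      (by rw [rpow_one_div_three_pow_three (by linarith)]; ring) hη,
    eventually_abs_wmd_sub_WK_sub_lt (k := k) (B := B) (p := p) (δ := δ) (ε := -1) (D := D)
      hγ hCg hg hCW hW (by norm_num) hKm hKmR hRz
      (by rw [rpow_one_div_three_pow_three (by linarith)]; ring) hη] with τ hplus hminus
  rw [abs_lt] at hplus hminus
  rcases (abs_eq zero_le_one).1 hs with rfl | rfl <;> constructor <;> linarith

theorem stmt_12_general
    (k : ℕ) (hk : 4 ≤ k) (K0 : ℝ) (hK0 : 0 < K0)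
    (K1 : ℝ) (hK1 : K1 = (Nat.doubleFactorial (2 * k + 1) : ℝ) * K0)
    (γ : ℝ) (hγ : γ = (k : ℝ) / 3 - 1 / 2)
    (p : ℝ) (hp : p ∈ Set.Ioo (2:ℝ) 3)
    (Bstar : ℝ)
    (Cg : ℝ) (hCg : 0 < Cg)
    (D : ℝ)
    (Γ : ℝ) (CW : ℝ) (hCW : 0 < CW)
    (g : ℝ → ℝ)
    (hgbd : ∀ y > (0:ℝ), |g y| ≤ Cg * y ^ (-5 : ℤ) * (1 + y ^ (4 * k - 2)))
    (W : ℝ → ℝ)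
    (hWasym : ∀ z ≥ (1:ℝ),
      |W z - z - z ^ (-2 : ℤ) - Γ * z ^ (-3 : ℤ)| ≤ CW * z ^ (-5 : ℤ)) :
    ∃ δbar ∈ Set.Ioo (0:ℝ) (K1 / 2), ∀ δ ∈ Set.Ioo (0:ℝ) δbar,
      ∀ Zδ : ℝ, Zδ = (4 / 3) * δ ^ (-(1 / (p - 2))) →
        ∃ τδ : ℝ, ∀ τ ≤ τδ,
          wmd k K1 γ Bstar p g δ 1 (Zδ / 2) τ
              > WK W ((K1 + 2 * δ) ^ ((1:ℝ) / 3)) (Zδ / 2) ∧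
          wmd k K1 γ Bstar p g δ (-1) (Zδ / 2) τ
              < WK W ((K1 - 2 * δ) ^ ((1:ℝ) / 3)) (Zδ / 2) + D * Real.exp (2 * γ * τ) ∧
          wmd k K1 γ Bstar p g δ 1 Zδ τ
              < WK W ((K1 + 2 * δ) ^ ((1:ℝ) / 3)) Zδ ∧
          wmd k K1 γ Bstar p g δ (-1) Zδ τ
              > WK W ((K1 - 2 * δ) ^ ((1:ℝ) / 3)) Zδ + D * Real.exp (2 * γ * τ) := by
  have hγ0 : 0 < γ := by
    have : (4:ℝ) ≤ k := mod_cast hk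
    rw [hγ]; linarith
  have hK1pos : 0 < K1 := hK1 ▸ mul_pos (mod_cast Nat.doubleFactorial_pos _) hK0
  have hinner : 0 < 1 * (1 - (2 / 3 : ℝ) ^ (p - 2)) := by
    rw [one_mul, sub_pos]; exact rpow_lt_one (by norm_num) (by norm_num) (by linarith [hp.1])
  have houter : 0 < -1 * (1 - (4 / 3 : ℝ) ^ (p - 2)) := by
    rw [neg_one_mul, neg_pos, sub_neg]; exact one_lt_rpow (by norm_num) (by linarith [hp.1])
  set R := (2 * K1) ^ ((1:ℝ) / 3)
  set C₅ := CW * R ^ 6 + 2 * |Bstar| * K1 ^ 2 * Cg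
  obtain ⟨δ₀, hδ₀, hsmall⟩ := (nhdsGT_basis (0:ℝ)).eventually_iff.1 <|
    (eventually_error_lt_gap (R := R) (C₃ := |Γ| * R ^ 4) (C₅ := C₅) (by norm_num) hinner hp).and
      (eventually_error_lt_gap (R := R) (C₃ := |Γ| * R ^ 4) (C₅ := C₅) (by norm_num) houter hp)
  refine ⟨min δ₀ (K1 / 4),
    ⟨lt_min hδ₀ (by positivity), (min_le_right _ _).trans_lt (by linarith)⟩, ?_⟩
  rintro δ ⟨hδ, hδlt⟩ Zδ rfl
  obtain ⟨⟨hR₁, hgap₁⟩, hR₂, hgap₂⟩ := hsmall ⟨hδ, hδlt.trans_le (min_le_left _ _)⟩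
  rw [show 4 / 3 * δ ^ (-(1 / (p - 2))) / 2 = 2 / 3 * δ ^ (-(1 / (p - 2))) by ring]
  have h2δ : 2 * δ < K1 := by linarith [hδlt.trans_le (min_le_right _ _)]
  obtain ⟨τδ, hτδ⟩ := eventually_atBot.1 <|
    (eventually_matching_at (D := D) hγ0 hCg.le hgbd hCW.le hWasym hδ h2δ (by norm_num) hR₁
      hgap₁).and
    (eventually_matching_at (D := D) hγ0 hCg.le hgbd hCW.le hWasym hδ h2δ (by norm_num) hR₂
      hgap₂)
  refine ⟨τδ, fun τ hτ ↦ ?_⟩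
  obtain ⟨⟨h₁, h₂⟩, h₃, h₄⟩ := hτδ τ hτ
  simp only [one_mul, neg_one_mul, sub_pos, neg_pos, sub_neg] at h₁ h₂ h₃ h₄
  exact ⟨h₁, h₂, h₃, h₄⟩

/-- Matching of the intermediate and inner barriers: they cross in the interval
`(Z_δ/2, Z_δ)` where `Z_δ = (4/3) δ^{-1/(p-2)}`. -/
theorem stmt_12
    (k : ℕ) (hk : 4 ≤ k) (K0 : ℝ) (hK0 : 0 < K0)
    (K1 : ℝ) (hK1 : K1 = (Nat.doubleFactorial (2 * k + 1) : ℝ) * K0)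
    (γ : ℝ) (hγ : γ = (k : ℝ) / 3 - 1 / 2)
    (p : ℝ) (hp : p ∈ Set.Ioo (2:ℝ) 3)
    (Bstar : ℝ) (hBstar : 0 < Bstar)
    (Cg : ℝ) (hCg : 0 < Cg)
    (D : ℝ) (hD : 0 < D)
    (Γ : ℝ) (CW : ℝ) (hCW : 0 < CW)
    (g : ℝ → ℝ)
    (hgbd : ∀ y > (0:ℝ), |g y| ≤ Cg * y ^ (-5 : ℤ) * (1 + y ^ (4 * k - 2)))
    (W : ℝ → ℝ)
    (hWpos : ∀ z > (0:ℝ), 0 < W z)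
    (hAlencar : ∀ z > (0:ℝ),
      deriv (deriv W) z / (1 + (deriv W z) ^ 2) + (3 / z) * deriv W z - 3 / W z = 0)
    (hWasym : ∀ z ≥ (1:ℝ),
      |W z - z - z ^ (-2 : ℤ) - Γ * z ^ (-3 : ℤ)| ≤ CW * z ^ (-5 : ℤ)) :
    ∃ δbar ∈ Set.Ioo (0:ℝ) (K1 / 2), ∀ δ ∈ Set.Ioo (0:ℝ) δbar,
      ∀ Zδ : ℝ, Zδ = (4 / 3) * δ ^ (-(1 / (p - 2))) →
        ∃ τδ : ℝ, ∀ τ ≤ τδ,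
          wmd k K1 γ Bstar p g δ 1 (Zδ / 2) τ
              > WK W ((K1 + 2 * δ) ^ ((1:ℝ) / 3)) (Zδ / 2) ∧
          wmd k K1 γ Bstar p g δ (-1) (Zδ / 2) τ
              < WK W ((K1 - 2 * δ) ^ ((1:ℝ) / 3)) (Zδ / 2) + D * Real.exp (2 * γ * τ) ∧
          wmd k K1 γ Bstar p g δ 1 Zδ τ
              < WK W ((K1 + 2 * δ) ^ ((1:ℝ) / 3)) Zδ ∧
          wmd k K1 γ Bstar p g δ (-1) Zδ τ
              > WK W ((K1 - 2 * δ) ^ ((1:ℝ) / 3)) Zδ + D * Real.exp (2 * γ * τ) :=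
  stmt_12_general k hk K0 hK0 K1 hK1 γ hγ p hp Bstar Cg hCg D Γ CW hCW g hgbd W hWasym
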